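/- Let G be a nonabelian finite p-group containing an abelian subgroup A of index p. If |G : G'| = p^2, then G is of maximal class. -/

import Mathlib

/-- A finite `p`-group is of *maximal class* if it has order `p ^ m` for some `m ≥ 2`
and its nilpotency class is exactly `m - 1`. -/
def IsMaximalClass (p : ℕ) (G : Type*) [Group G] : Prop :=
  ∃ m : ℕ, 2 ≤ m ∧ Nat.card G = p ^ m ∧
    upperCentralSeries G (m - 1) = ⊤ ∧ upperCentralSeries G (m - 2) ≠ ⊤

/-!
Pick `x ∉ A`, so that `G = A⟨x⟩`. Since `A` is abelian and normal, `a ↦ ⁅a, x⁆` is a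
homomorphism `A → G` with kernel `Z(G)` and image `G'`; hence `|G| = p |G'| |Z(G)|`, and
`|G : G'| = p²` forces `|Z(G)| = p`. Moreover `Z(G) ≤ G'`: otherwise `G' Z(G)` has index at most `p`, so
`G = G' Z(G) ⟨x⟩` for some `x`, and `Z(G)⟨x⟩` is abelian, which makes `G' ≤ ⁅G', G⁆` and so `G' = 1` by nilpotency.
Consequently `G / Z(G)` again has an abelian subgroup of index `p` (the image of `A ≥ Z(G)`) and
a commutator subgroup of index `p²`. Either it is abelian, and then it has order `p²`, or it is
of maximal class by induction; in both cases passing back to `G` raises the order and the class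
by one.
-/

open Subgroup
open scoped commutatorElement

namespace Subgroup

variable {G : Type*} [Group G] {p : ℕ}

theorem isCoatom_of_index_eq_prime (hp : p.Prime) {H : Subgroup G} (hH : H.index = p) :
    IsCoatom H := by
  refine ⟨fun h ↦ hp.one_lt.ne' (by rw [← hH, h, index_top]), fun K hHK ↦ ?_⟩
  have hmul : H.relIndex K * K.index = p := hH ▸ relIndex_mul_index hHK.le
  rcases hp.eq_one_or_self_of_dvd _ (Dvd.intro_left _ hmul) with hK | hK
  · exact index_eq_one.mp hK
  · rw [hK, Nat.mul_eq_right hp.ne_zero, relIndex_eq_one] at hmul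
    exact absurd hmul hHK.not_ge

theorem sup_zpowers_eq_top_of_index_eq_prime (hp : p.Prime) {H : Subgroup G} (hH : H.index = p)
    {x : G} (hx : x ∉ H) : H ⊔ zpowers x = ⊤ :=
  (isCoatom_of_index_eq_prime hp hH).2 _ <|
    SetLike.lt_iff_le_and_exists.mpr ⟨le_sup_left, x, mem_sup_right (mem_zpowers x), hx⟩

theorem exists_sup_zpowers_eq_top_of_index_dvd_prime (hp : p.Prime) {H : Subgroup G}
    (hH : H.index ∣ p) : ∃ x, H ⊔ zpowers x = ⊤ := by
  rcases hp.eq_one_or_self_of_dvd _ hH with h1 | hpH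
  · exact ⟨1, by rw [index_eq_one.mp h1, top_sup_eq]⟩
  · obtain ⟨x, hx⟩ :=
      SetLike.exists_not_mem_of_ne_top H (isCoatom_of_index_eq_prime hp hpH).1 rfl
    exact ⟨x, sup_zpowers_eq_top_of_index_eq_prime hp hpH hx⟩

theorem normal_of_index_eq_prime [Group.IsNilpotent G] (hp : p.Prime) {H : Subgroup G}
    (hH : H.index = p) : H.Normal :=
  NormalizerCondition.normal_of_coatom H Group.normalizerCondition_of_isNilpotent
    (isCoatom_of_index_eq_prime hp hH)

theorem mem_center_of_sup_zpowers_eq_top {H : Subgroup G} {x g : G} (hHx : H ⊔ zpowers x = ⊤)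
    (hH : ∀ h ∈ H, h * g = g * h) (hx : x * g = g * x) : g ∈ center G := by
  rw [← centralizer_univ, ← coe_top, ← hHx, ← closure_eq H, zpowers_eq_closure, ← closure_union,
    centralizer_closure]
  rintro h (hh | rfl)
  exacts [hH h hh, hx]

theorem commutatorElement_mem_of_normal (H : Subgroup G) [H.Normal] {a : G} (ha : a ∈ H)
    (x : G) : ⁅a, x⁆ ∈ H :=
  commutator_le_left H ⊤ (commutator_mem_commutator ha (mem_top x))

theorem eq_bot_of_le_commutator_top [Group.IsNilpotent G] {H : Subgroup G}
    (hH : H ≤ ⁅H, ⊤⁆) : H = ⊥ := by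
  have hlcs (n : ℕ) : H ≤ lowerCentralSeries ⊤ n := by
    induction n with
    | zero => exact le_top
    | succ n ih => exact hH.trans (commutator_mono ih le_top)
  obtain ⟨n, hn⟩ := nilpotent_iff_lowerCentralSeries.mp ‹Group.IsNilpotent G›
  exact eq_bot_iff.mpr (hn ▸ hlcs n)

end Subgroup

section

variable {G : Type*} [Group G] {p : ℕ}

theorem commutator_le_of_closure_eq_top {S : Set G} (hS : closure S = ⊤) {N : Subgroup G}
    [N.Normal] (hSN : ∀ s ∈ S, ∀ t ∈ S, ⁅s, t⁆ ∈ N) : commutator G ≤ N := by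
  rw [← Normal.quotient_commutative_iff_commutator_le]
  have himage : closure (QuotientGroup.mk' N '' S) = ⊤ := by
    rw [← MonoidHom.map_closure, hS, map_top_of_surjective _ (QuotientGroup.mk'_surjective N)]
  have := isMulCommutative_closure (k := QuotientGroup.mk' N '' S) <| by
    rintro _ ⟨s, hs, rfl⟩ _ ⟨t, ht, rfl⟩
    rw [← commutatorElement_eq_one_iff_mul_comm, ← map_commutatorElement, QuotientGroup.mk'_apply,
      QuotientGroup.eq_one_iff]
    exact hSN s hs t ht
  refine .of_comm fun a b ↦ ?_
  exact setLike_mul_comm (himage ▸ mem_top a) (himage ▸ mem_top b)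

theorem isMulCommutative_of_commutator_sup_eq_top [Group.IsNilpotent G] {H : Subgroup G}
    [IsMulCommutative H] (hH : commutator G ⊔ H = ⊤) : IsMulCommutative G := by
  rw [← commutator_eq_bot_iff]
  refine eq_bot_of_le_commutator_top <| commutator_le_of_closure_eq_top
    (S := commutator G ∪ H) (by rw [Subgroup.closure_union, closure_eq, closure_eq, hH]) ?_
  rintro s (hs | hs) t ht
  · exact commutator_mem_commutator hs (mem_top t)
  rcases ht with ht | ht
  · rw [← inv_mem_iff, commutatorElement_inv]
    exact commutator_mem_commutator ht (mem_top s)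
  · rw [commutatorElement_eq_one_iff_mul_comm.mpr (setLike_mul_comm hs ht)]
    exact one_mem _

section AbelianSubgroup

variable (A : Subgroup G) [A.Normal] [IsMulCommutative A]

def commutatorHom (x : G) : A →* G where
  toFun a := ⁅(a : G), x⁆
  map_one' := by simp
  map_mul' a b := by
    have hb := A.commutatorElement_mem_of_normal b.2 x
    calc ⁅((a * b : A) : G), x⁆ = (a : G) * ⁅(b : G), x⁆ * (a : G)⁻¹ * ⁅(a : G), x⁆ := by
          push_cast; group
      _ = ⁅(b : G), x⁆ * ⁅(a : G), x⁆ := by rw [setLike_mul_comm a.2 hb]; group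
      _ = ⁅(a : G), x⁆ * ⁅(b : G), x⁆ :=
          setLike_mul_comm hb (A.commutatorElement_mem_of_normal a.2 x)

@[simp]
theorem commutatorHom_apply (x : G) (a : A) : commutatorHom A x a = ⁅(a : G), x⁆ := rfl

variable {A} {x : G}

theorem ker_commutatorHom (hAx : A ⊔ zpowers x = ⊤) :
    (commutatorHom A x).ker = (center G).subgroupOf A := by
  ext a
  rw [MonoidHom.mem_ker, commutatorHom_apply, commutatorElement_eq_one_iff_mul_comm,
    mem_subgroupOf]
  exact ⟨fun hax ↦ mem_center_of_sup_zpowers_eq_top hAx (fun b hb ↦ setLike_mul_comm hb a.2)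
    hax.symm, fun ha ↦ (mem_center_iff.mp ha x).symm⟩

theorem range_commutatorHom_le : (commutatorHom A x).range ≤ A := by
  rintro _ ⟨a, rfl⟩
  exact A.commutatorElement_mem_of_normal a.2 x

theorem normal_range_commutatorHom (hAx : A ⊔ zpowers x = ⊤) :
    (commutatorHom A x).range.Normal := by
  rw [← normalizer_eq_top_iff, eq_top_iff, ← hAx, sup_le_iff, zpowers_le]
  refine ⟨le_trans ?_ (centralizer_le_normalizer ((commutatorHom A x).range : Set G)), ?_⟩
  · exact le_centralizer_iff.mp
      (range_commutatorHom_le.trans (le_centralizer_iff_isMulCommutative.mpr ‹_›))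
  · have hconj : (MulAut.conj x : G →* G).comp (commutatorHom A x) =
        (commutatorHom A x).comp (MulAut.conjNormal (H := A) x : A →* A) := by
      ext a
      simp
    rw [mem_normalizer_iff_map_conj_eq, MonoidHom.map_range, hconj, MonoidHom.range_comp,
      MonoidHom.range_eq_top.mpr (MulEquiv.surjective _), ← MonoidHom.range_eq_map]

theorem range_commutatorHom (hAx : A ⊔ zpowers x = ⊤) :
    (commutatorHom A x).range = commutator G := by
  refine le_antisymm (fun _ ⟨a, ha⟩ ↦ ha ▸ commutator_mem_commutator (mem_top _) (mem_top x)) ?_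
  have := normal_range_commutatorHom hAx
  refine commutator_le_of_closure_eq_top (S := A ∪ {x})
    (by rw [Subgroup.closure_union, closure_eq, ← zpowers_eq_closure, hAx]) ?_
  rintro a (ha | rfl) b (hb | rfl)
  · rw [commutatorElement_eq_one_iff_mul_comm.mpr (setLike_mul_comm ha hb)]
    exact one_mem _
  · exact ⟨⟨a, ha⟩, rfl⟩
  · rw [← inv_mem_iff, commutatorElement_inv]
    exact ⟨⟨b, hb⟩, rfl⟩
  · rw [commutatorElement_self]
    exact one_mem _

end AbelianSubgroup

theorem center_le_of_isMulCommutative_of_index_eq_prime (hp : p.Prime) {A : Subgroup G}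
    [IsMulCommutative A] (hA : A.index = p) (hG : ¬ IsMulCommutative G) : center G ≤ A := by
  intro z hz
  by_contra hzA
  have hAz := sup_zpowers_eq_top_of_index_eq_prime hp hA hzA
  have hAZ : A ≤ center G := fun a ha ↦ mem_center_of_sup_zpowers_eq_top hAz
    (fun b hb ↦ setLike_mul_comm hb ha) (mem_center_iff.mp hz a).symm
  apply hG
  rw [← center_eq_top_iff, eq_top_iff, ← hAz]
  exact sup_le hAZ ((zpowers_le).mpr hz)

theorem card_eq_prime_mul_card_commutator_mul_card_center (hp : p.Prime)
    {A : Subgroup G} [A.Normal] [IsMulCommutative A] (hA : A.index = p)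
    (hG : ¬ IsMulCommutative G) :
    Nat.card G = p * Nat.card (commutator G) * Nat.card (center G) := by
  obtain ⟨x, hx⟩ :=
    SetLike.exists_not_mem_of_ne_top A (isCoatom_of_index_eq_prime hp hA).1 rfl
  have hAx := sup_zpowers_eq_top_of_index_eq_prime hp hA hx
  have hker : Nat.card (commutatorHom A x).ker = Nat.card (center G) := by
    rw [ker_commutatorHom hAx]
    exact Nat.card_congr
      (subgroupOfEquivOfLe (center_le_of_isMulCommutative_of_index_eq_prime hp hA hG)).toEquiv
  have hrange : Nat.card (A ⧸ (commutatorHom A x).ker) = Nat.card (commutator G) := by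
    rw [← range_commutatorHom hAx]
    exact Nat.card_congr (QuotientGroup.quotientKerEquivRange _).toEquiv
  rw [← A.index_mul_card, hA, card_eq_card_quotient_mul_card_subgroup (commutatorHom A x).ker,
    hker, hrange, mul_assoc]

theorem center_le_commutator_of_index_commutator_eq_sq [Group.IsNilpotent G] (hp : p.Prime)
    (hG' : (commutator G).index = p ^ 2) (hG : ¬ IsMulCommutative G) :
    center G ≤ commutator G := by
  intro z hz
  by_contra hzG'
  set K := commutator G ⊔ center G
  have hK : K.index ∣ p := by
    have hmul : (commutator G).relIndex K * K.index = p ^ 2 :=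
      hG' ▸ relIndex_mul_index le_sup_left
    obtain ⟨i, hi, hKi⟩ := (Nat.dvd_prime_pow hp).mp (Dvd.intro_left _ hmul)
    have hrel : (commutator G).relIndex K ≠ 1 :=
      fun h ↦ hzG' (relIndex_eq_one.mp h (mem_sup_right hz))
    interval_cases i
    · simp [hKi]
    · simp [hKi]
    · rw [hKi, Nat.mul_eq_right (pow_ne_zero 2 hp.ne_zero)] at hmul
      exact absurd hmul hrel
  obtain ⟨x, hx⟩ := exists_sup_zpowers_eq_top_of_index_dvd_prime hp hK
  have := isMulCommutative_closure (k := center G ∪ {x}) <| by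
    rintro a (ha | rfl) b (hb | rfl)
    · exact mem_center_iff.mp hb a
    · exact (mem_center_iff.mp ha b).symm
    · exact mem_center_iff.mp hb a
    · rfl
  exact hG <| isMulCommutative_of_commutator_sup_eq_top (H := closure (center G ∪ {x})) <| by
    rw [Subgroup.closure_union, closure_eq, ← zpowers_eq_closure, ← sup_assoc, hx]

theorem card_center_eq_prime_of_index_commutator_eq_sq [Finite G] [Group.IsNilpotent G]
    (hp : p.Prime) {A : Subgroup G} [IsMulCommutative A] (hA : A.index = p)
    (hG' : (commutator G).index = p ^ 2) (hG : ¬ IsMulCommutative G) :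
    Nat.card (center G) = p := by
  have := normal_of_index_eq_prime hp hA
  have h := card_eq_prime_mul_card_commutator_mul_card_center hp hA hG
  rw [← (commutator G).card_mul_index, hG'] at h
  have hpos : 0 < p * Nat.card (commutator G) := Nat.mul_pos hp.pos Nat.card_pos
  exact (Nat.eq_of_mul_eq_mul_left hpos (by rw [← h]; ring)).symm

theorem index_commutator_quotient {N : Subgroup G} [N.Normal] (hN : N ≤ commutator G) :
    (commutator (G ⧸ N)).index = (commutator G).index := by
  have hsurj := QuotientGroup.mk'_surjective N
  rw [← index_map_eq _ hsurj (by rwa [QuotientGroup.ker_mk']), map_commutator_eq,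
    MonoidHom.range_eq_top.mpr hsurj, commutator_def]

theorem isMaximalClass_of_card_eq_prime_sq (hp : p.Prime) (hG : Nat.card G = p ^ 2) :
    IsMaximalClass p G := by
  have : Fact p.Prime := ⟨hp⟩
  refine ⟨2, le_rfl, hG, ?_, ?_⟩
  · exact upperCentralSeries_one_eq_top_iff.mpr (IsPGroup.isMulCommutative_of_card_eq_prime_sq hG)
  · intro h
    change Subgroup.upperCentralSeries G 0 = ⊤ at h
    have h1 := congrArg (fun H : Subgroup G ↦ Nat.card H) h
    simp only [Subgroup.upperCentralSeries_zero, card_bot, card_top, hG] at h1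
    exact (Nat.one_lt_pow two_ne_zero hp.one_lt).ne h1

theorem isMaximalClass_of_quotient_center (hZ : Nat.card (center G) = p)
    (h : IsMaximalClass p (G ⧸ center G)) : IsMaximalClass p G := by
  obtain ⟨m, hm, hcard, htop, hne⟩ := h
  obtain ⟨k, rfl⟩ : ∃ k, m = k + 2 := ⟨m - 2, by omega⟩
  -- `IsMaximalClass` is phrased with the deprecated alias `upperCentralSeries`, which `rw` does
  -- not unfold.
  change Subgroup.upperCentralSeries _ (k + 1) = ⊤ at htop
  change Subgroup.upperCentralSeries _ k ≠ ⊤ at hne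
  refine ⟨k + 3, by omega, ?_, ?_, ?_⟩
  · rw [card_eq_card_quotient_mul_card_subgroup (center G), hcard, hZ]
    ring
  · change Subgroup.upperCentralSeries G (k + 1 + 1) = ⊤
    rw [← Subgroup.comap_upperCentralSeries_quotient_center, htop, comap_top]
  · change Subgroup.upperCentralSeries G (k + 1) ≠ ⊤
    rw [← Subgroup.comap_upperCentralSeries_quotient_center,
      ← comap_top (QuotientGroup.mk' (center G))]
    exact (comap_injective (QuotientGroup.mk'_surjective _)).ne hne

theorem IsPGroup.isMaximalClass_of_index_commutator_eq_sq [Finite G] (hp : p.Prime)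
    (hpG : IsPGroup p G) (hG : ¬ IsMulCommutative G) {A : Subgroup G} [IsMulCommutative A]
    (hA : A.index = p) (hG' : (commutator G).index = p ^ 2) : IsMaximalClass p G := by
  induction h : Nat.card G using Nat.strong_induction_on generalizing G with
  | _ n ih =>
  have : Fact p.Prime := ⟨hp⟩
  have := hpG.isNilpotent
  have hZ := card_center_eq_prime_of_index_commutator_eq_sq hp hA hG' hG
  apply isMaximalClass_of_quotient_center hZ
  have hQ' : (commutator (G ⧸ center G)).index = p ^ 2 :=
    (index_commutator_quotient (center_le_commutator_of_index_commutator_eq_sq hp hG' hG)).trans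
      hG'
  by_cases hQ : IsMulCommutative (G ⧸ center G)
  · apply isMaximalClass_of_card_eq_prime_sq hp
    rw [← hQ', (commutator_eq_bot_iff _).mpr hQ, index_bot]
  have hcard : Nat.card (G ⧸ center G) < n := by
    rw [← h, card_eq_card_quotient_mul_card_subgroup (center G), hZ]
    exact lt_mul_of_one_lt_right Nat.card_pos hp.one_lt
  have hAQ : (A.map (QuotientGroup.mk' (center G))).index = p := by
    rw [index_map_eq _ (QuotientGroup.mk'_surjective _) (by
      rw [QuotientGroup.ker_mk']; exact center_le_of_isMulCommutative_of_index_eq_prime hp hA hG)]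
    exact hA
  exact ih _ hcard (hpG.to_quotient _) hQ hAQ hQ' rfl

end

/-- Let `G` be a nonabelian finite `p`-group containing an abelian subgroup `A`
of index `p`. If `|G : G'| = p ^ 2`, then `G` is of maximal class. -/
theorem stmt_17 {p : ℕ} (hp : p.Prime) (G : Type*) [Group G] [Finite G]
    (hpG : IsPGroup p G) (hna : ¬ ∀ a b : G, a * b = b * a)
    (A : Subgroup G) (hab : ∀ a ∈ A, ∀ b ∈ A, a * b = b * a) (hidx : A.index = p)
    (hcomm : (commutator G).index = p ^ 2) :
    IsMaximalClass p G := by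
  have : IsMulCommutative A := .of_setLike_mul_comm hab
  exact hpG.isMaximalClass_of_index_commutator_eq_sq hp (isMulCommutative_iff.not.mpr hna) hidx
    hcomm
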